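/- arXiv:2412.19929 — 5 statements merged into one kernel-verified Lean document; each statement's English description precedes it below -/
import Mathlib

section
/- Let p, q, r, s be integers with r > 0 and r + s > 0, and let k be an integer such that ⌊p/r⌋ = ⌊(p+q)/(r+s)⌋ = k. Then for every real x ≥ 1, ⌊(p·x + q)/(r·x + s)⌋ = k. -/
theorem homographic_unambiguous_floor (p q r s k : ℤ) (hr : r > 0) (hrs : r + s > 0)
    (h1 : ⌊(p : ℝ) / (r : ℝ)⌋ = k) (h2 : ⌊((p : ℝ) + q) / ((r : ℝ) + s)⌋ = k) :
    ∀ x : ℝ, 1 ≤ x → ⌊((p : ℝ) * x + q) / ((r : ℝ) * x + s)⌋ = k := by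
  intro x hx
  have hrR : (0:ℝ) < r := by exact_mod_cast hr
  have hrsR : (0:ℝ) < (r:ℝ) + s := by exact_mod_cast hrs
  have hden : (0:ℝ) < (r:ℝ) * x + s := by nlinarith
  have hb1 : (k:ℝ) ≤ (p:ℝ) / r := by
    have := Int.floor_le ((p:ℝ) / r); rw [h1] at this; exact_mod_cast this
  have hb2 : (p:ℝ) / r < k + 1 := by
    have := Int.lt_floor_add_one ((p:ℝ) / r); rw [h1] at this; exact_mod_cast this
  have ha1 : (k:ℝ) ≤ ((p:ℝ) + q) / ((r:ℝ) + s) := by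
    have := Int.floor_le (((p:ℝ) + q) / ((r:ℝ) + s)); rw [h2] at this; exact_mod_cast this
  have ha2 : ((p:ℝ) + q) / ((r:ℝ) + s) < k + 1 := by
    have := Int.lt_floor_add_one (((p:ℝ) + q) / ((r:ℝ) + s)); rw [h2] at this
    exact_mod_cast this
  have hb1' : (k:ℝ) * r ≤ p := by
    have := (le_div_iff₀ hrR).mp hb1; linarith
  have hb2' : (p:ℝ) < ((k:ℝ) + 1) * r := by
    have := (div_lt_iff₀ hrR).mp hb2; linarith
  have ha1' : (k:ℝ) * ((r:ℝ) + s) ≤ (p:ℝ) + q := by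
    have := (le_div_iff₀ hrsR).mp ha1; linarith
  have ha2' : (p:ℝ) + q < ((k:ℝ) + 1) * ((r:ℝ) + s) := by
    have := (div_lt_iff₀ hrsR).mp ha2; linarith
  rw [Int.floor_eq_iff]
  constructor
  · rw [le_div_iff₀ hden]
    nlinarith [mul_le_mul_of_nonneg_right hb1' (by linarith : (0:ℝ) ≤ x - 1)]
  · rw [div_lt_iff₀ hden]
    nlinarith [mul_le_mul_of_nonneg_right hb2'.le (by linarith : (0:ℝ) ≤ x - 1)]
end

section
/- Let x be an irrational real number and let p, q, r, s be integers with p·s − q·r ≠ 0. Then there exists δ > 0 such that for every real t with |t − x| < δ, one has r·t + s ≠ 0 and ⌊(p·t + q)/(r·t + s)⌋ = ⌊(p·x + q)/(r·x + s)⌋. -/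
theorem homographic_floor_locally_constant (x : ℝ) (hx : Irrational x)
    (p q r s : ℤ) (hdet : p * s - q * r ≠ 0) :
    ∃ δ > 0, ∀ t : ℝ, |t - x| < δ →
      (r : ℝ) * t + s ≠ 0 ∧
      ⌊((p : ℝ) * t + q) / ((r : ℝ) * t + s)⌋ =
        ⌊((p : ℝ) * x + q) / ((r : ℝ) * x + s)⌋ := by
  have hden : (r : ℝ) * x + s ≠ 0 := by
    rcases eq_or_ne r 0 with hr | hr
    · subst hr
      simp only [Int.cast_zero, zero_mul, zero_add]
      intro hs
      apply hdet
      have hs0 : s = 0 := by exact_mod_cast hs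
      simp [hs0]
    · intro h
      apply hx
      refine ⟨(-s / r : ℚ), ?_⟩
      have hr' : (r : ℝ) ≠ 0 := Int.cast_ne_zero.mpr hr
      push_cast
      rw [div_eq_iff hr']
      linarith
  set y : ℝ := ((p : ℝ) * x + q) / ((r : ℝ) * x + s) with hy
  have h1 : (p : ℝ) * x + q = y * ((r : ℝ) * x + s) := by
    rw [hy, div_mul_cancel₀ _ hden]
  have hyirr : Irrational y := by
    rintro ⟨a, ha⟩
    have h3 : ((p : ℝ) - a * r) * x = (a : ℝ) * s - q := by
      rw [← ha] at h1
      linear_combination h1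
    by_cases hc : (p : ℝ) - a * r = 0
    · rw [hc, zero_mul] at h3
      have h2 : (a : ℝ) * s = q := by linarith
      apply hdet
      have hR : (p : ℝ) * s - (q : ℝ) * r = 0 := by
        linear_combination s * hc + r * h2
      exact_mod_cast hR
    · apply hx
      refine ⟨((a * s - q) / (p - a * r) : ℚ), ?_⟩
      push_cast
      rw [div_eq_iff hc]
      linear_combination -h3
  have hfl : (⌊y⌋ : ℝ) < y := lt_of_le_of_ne (Int.floor_le y) (Ne.symm (hyirr.ne_int ⌊y⌋))
  have hfu : y < ⌊y⌋ + 1 := Int.lt_floor_add_one y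
  have hcont : ContinuousAt (fun t : ℝ => ((p : ℝ) * t + q) / ((r : ℝ) * t + s)) x :=
    ContinuousAt.div (by fun_prop) (by fun_prop) hden
  have hcden : ContinuousAt (fun t : ℝ => (r : ℝ) * t + s) x := by fun_prop
  have hev1 : ∀ᶠ t in nhds x, (r : ℝ) * t + s ≠ 0 := hcden.eventually_ne hden
  have hev2 : ∀ᶠ t in nhds x,
      ((p : ℝ) * t + q) / ((r : ℝ) * t + s) ∈ Set.Ioo ((⌊y⌋ : ℝ)) ((⌊y⌋ : ℝ) + 1) :=
    hcont.eventually_mem (isOpen_Ioo.mem_nhds ⟨hfl, hfu⟩)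
  obtain ⟨δ, hδ, hδ'⟩ := Metric.eventually_nhds_iff.mp (hev1.and hev2)
  refine ⟨δ, hδ, fun t ht => ?_⟩
  have := hδ' (by rwa [Real.dist_eq])
  refine ⟨this.1, ?_⟩
  obtain ⟨hl, hu⟩ := this.2
  rw [Int.floor_eq_iff]
  constructor
  · exact_mod_cast hl.le
  · exact_mod_cast hu
end

section
/- For every integer n ≥ 1 and every real w with 0 ≤ w ≤ 5/2, with c(n, w) := ∑_{k=0}^∞ (−1)^k · w^k · (2n−2)!/(2n+2k−2)!, one has 1 − 5/(4n(2n−1)) ≤ c(n, w) ≤ 1. -/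
noncomputable def cosTail (n : ℕ) (w : ℝ) : ℝ :=
  ∑' k : ℕ, (-1) ^ k * w ^ k * (Nat.factorial (2 * n - 2) : ℝ) / (Nat.factorial (2 * n + 2 * k - 2) : ℝ)

theorem cosTail_bounds (n : ℕ) (hn : 1 ≤ n) (w : ℝ) (hw0 : 0 ≤ w) (hw1 : w ≤ 5 / 2) :
    1 - 5 / (4 * (n : ℝ) * (2 * n - 1)) ≤ cosTail n w ∧ cosTail n w ≤ 1 := by
  obtain ⟨m, rfl⟩ := Nat.exists_eq_add_of_le hn
  set a : ℕ → ℝ := fun k => w ^ k * (Nat.factorial (2 * m) : ℝ) / (Nat.factorial (2 * m + 2 * k) : ℝ) with ha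
  have hfacpos : ∀ j : ℕ, (0 : ℝ) < (Nat.factorial j : ℝ) := fun j => by
    exact_mod_cast Nat.factorial_pos j
  have hanon : ∀ k, 0 ≤ a k := by
    intro k
    apply div_nonneg (mul_nonneg (pow_nonneg hw0 _) (le_of_lt (hfacpos _))) (le_of_lt (hfacpos _))
  have hcos : cosTail (1 + m) w = ∑' k, (-1) ^ k * a k := by
    unfold cosTail
    congr 1
    funext k
    have h1 : 2 * (1 + m) - 2 = 2 * m := by omega
    have h2 : 2 * (1 + m) + 2 * k - 2 = 2 * m + 2 * k := by omega
    rw [h1, h2, ha]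
    ring
  -- summability
  have hasum : Summable a := by
    apply Summable.of_nonneg_of_le hanon ?_ (Real.summable_pow_div_factorial w)
    intro k
    rw [ha]
    have hfac : (Nat.factorial (2 * m) : ℝ) * (Nat.factorial k : ℝ) ≤ (Nat.factorial (2 * m + 2 * k) : ℝ) := by
      have h1 : Nat.factorial (2 * m) * Nat.factorial k ≤ Nat.factorial (2 * m) * Nat.factorial (2 * k) :=
        Nat.mul_le_mul_left _ (Nat.factorial_le (by omega))
      have h2 : Nat.factorial (2 * m) * Nat.factorial (2 * k) ≤ Nat.factorial (2 * m + 2 * k) :=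
        Nat.le_of_dvd (Nat.factorial_pos _) (Nat.factorial_mul_factorial_dvd_factorial_add _ _)
      exact_mod_cast le_trans h1 h2
    rw [div_le_div_iff₀ (hfacpos _) (hfacpos _)]
    calc w ^ k * (Nat.factorial (2 * m) : ℝ) * (Nat.factorial k : ℝ)
        = w ^ k * ((Nat.factorial (2 * m) : ℝ) * (Nat.factorial k : ℝ)) := by ring
      _ ≤ w ^ k * (Nat.factorial (2 * m + 2 * k) : ℝ) := by
          exact mul_le_mul_of_nonneg_left hfac (pow_nonneg hw0 _)
  have haltsum : ∀ j : ℕ, Summable (fun k => (-1 : ℝ) ^ k * a (k + j)) := by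
    intro j
    apply Summable.of_abs
    have : Summable (fun k => a (k + j)) := (summable_nat_add_iff j).2 hasum
    refine this.congr fun k => ?_
    rw [abs_mul, abs_pow, abs_neg, abs_one, one_pow, one_mul, abs_of_nonneg (hanon _)]
  -- the shifted sequence is antitone
  have key : ∀ k, a (k + 1 + 1) ≤ a (k + 1) := by
    intro k
    rw [ha]
    simp only
    have hrw : 2 * m + 2 * (k + 1 + 1) = (2 * m + 2 * k + 3) + 1 := by omega
    have hrw2 : 2 * m + 2 * k + 3 = (2 * m + 2 * (k + 1)) + 1 := by omega
    have hfeq : (Nat.factorial (2 * m + 2 * (k + 1 + 1)) : ℝ)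
        = ((2 * m + 2 * k + 4 : ℕ) : ℝ) * ((2 * m + 2 * k + 3 : ℕ) : ℝ)
          * (Nat.factorial (2 * m + 2 * (k + 1)) : ℝ) := by
      rw [hrw, Nat.factorial_succ, hrw2, Nat.factorial_succ]
      push_cast
      ring_nf
    rw [hfeq, div_le_div_iff₀ (by positivity) (hfacpos _)]
    have hwp : w ^ (k + 1 + 1) = w * w ^ (k + 1) := by ring
    have h12 : (12 : ℝ) ≤ ((2 * m + 2 * k + 4 : ℕ) : ℝ) * ((2 * m + 2 * k + 3 : ℕ) : ℝ) := by
      have : (12 : ℕ) ≤ (2 * m + 2 * k + 4) * (2 * m + 2 * k + 3) := by nlinarith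
      exact_mod_cast this
    have hpow : (0:ℝ) ≤ w ^ (k + 1) := pow_nonneg hw0 _
    have hfnn : (0:ℝ) ≤ (Nat.factorial (2 * m) : ℝ) * (Nat.factorial (2 * m + 2 * (k+1)) : ℝ) :=
      le_of_lt (mul_pos (hfacpos _) (hfacpos _))
    nlinarith [mul_nonneg hpow hfnn, mul_nonneg hpow (le_of_lt (hfacpos (2 * m + 2 * (k+1))))]
  have hanti : Antitone (fun k => a (k + 1)) := antitone_nat_of_succ_le key
  set T : ℝ := ∑' k, (-1 : ℝ) ^ k * a (k + 1) with hTdef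
  have hT : Filter.Tendsto (fun N => ∑ i ∈ Finset.range N, (-1 : ℝ) ^ i * a (i + 1))
      Filter.atTop (nhds T) := (haltsum 1).hasSum.tendsto_sum_nat
  have hT0 : 0 ≤ T := by simpa using hanti.alternating_series_le_tendsto hT 0
  have hT1 : T ≤ a 1 := by simpa using hanti.tendsto_le_alternating_series hT 0
  -- split off the first term
  have hsplit : cosTail (1 + m) w = a 0 - T := by
    rw [hcos, Summable.tsum_eq_zero_add ((haltsum 0).congr (fun k => by rw [Nat.add_zero]))]
    have hneg : ∑' (b : ℕ), (-1 : ℝ) ^ (b + 1) * a (b + 1) = -T := by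
      rw [hTdef, ← tsum_neg]
      exact tsum_congr fun k => by ring
    rw [hneg]
    ring
  have ha0 : a 0 = 1 := by
    simp only [ha, pow_zero, one_mul, Nat.mul_zero, Nat.add_zero]
    exact div_self (ne_of_gt (hfacpos _))
  have ha1 : a 1 ≤ 5 / (4 * ((1 + m : ℕ) : ℝ) * (2 * ((1 + m : ℕ) : ℝ) - 1)) := by
    have hfeq : (Nat.factorial (2 * m + 2 * 1) : ℝ)
        = ((2 * m + 2 : ℕ) : ℝ) * ((2 * m + 1 : ℕ) : ℝ) * (Nat.factorial (2 * m) : ℝ) := by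
      rw [show 2 * m + 2 * 1 = (2 * m + 1) + 1 from by omega, Nat.factorial_succ,
        show 2 * m + 1 = (2 * m) + 1 from rfl, Nat.factorial_succ]
      push_cast
      ring
    rw [ha]
    simp only
    rw [hfeq]
    have hd : 4 * ((1 + m : ℕ) : ℝ) * (2 * ((1 + m : ℕ) : ℝ) - 1)
        = 2 * (((2 * m + 2 : ℕ) : ℝ) * ((2 * m + 1 : ℕ) : ℝ)) := by
      push_cast
      ring
    rw [hd]
    have hp1 : (0:ℝ) < ((2 * m + 2 : ℕ) : ℝ) * ((2 * m + 1 : ℕ) : ℝ) := by positivity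
    rw [div_le_div_iff₀ (by positivity) (by positivity)]
    have hfp := hfacpos (2 * m)
    nlinarith
  constructor
  · rw [hsplit, ha0]
    have : 5 / (4 * ((1 + m : ℕ) : ℝ) * (2 * ((1 + m : ℕ) : ℝ) - 1)) ≥ T := le_trans hT1 ha1
    linarith
  · rw [hsplit, ha0]
    linarith
end

section
/- For n ≥ 0 let t_n := (2n)!/(4^n · (n!)² · (2n+1)). For every integer n ≥ 1 and every real w with 0 ≤ w ≤ 1, define a(n, w) := ∑_{k=0}^∞ (t_{n+k−1}/t_{n−1}) · w^k. Then 1 ≤ a(n, w) ≤ 1 + (π/2 − 1) · w / t_{n−1}. -/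
noncomputable def arcsinCoeff (n : ℕ) : ℝ :=
  (Nat.factorial (2 * n) : ℝ) / (4 ^ n * (Nat.factorial n : ℝ) ^ 2 * (2 * n + 1))

noncomputable def arcsinTail (n : ℕ) (w : ℝ) : ℝ :=
  ∑' k : ℕ, (arcsinCoeff (n + k - 1) / arcsinCoeff (n - 1)) * w ^ k

/-!
With `c n = (2n)! / (4^n (n!)^2)`, the binomial series gives `∑ c n y^n = (1 - y)^(-1/2)` for
`|y| < 1`; integrating `∑ c n u^(2n) = 1 / √(1 - u^2)` term by term over `[0, x]` gives
`arcsin x = ∑ t n x^(2n+1)`, since `t n = c n / (2n + 1)`. Letting `x → 1⁻` bounds the partial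
sums of `t` by `π / 2` and then gives `∑ t n = π / 2`. Finally, as `t` is decreasing and
`0 ≤ w ≤ 1`, the `k`-th term of the tail series is at most `t k · w / t (n - 1)` for `k ≥ 1`,
while its `0`-th term is `1`.
-/

open Real Set Filter Topology Finset Interval

noncomputable def invSqrtCoeff (n : ℕ) : ℝ :=
  (Nat.factorial (2 * n) : ℝ) / (4 ^ n * (Nat.factorial n : ℝ) ^ 2)

lemma invSqrtCoeff_pos (n : ℕ) : 0 < invSqrtCoeff n := by
  unfold invSqrtCoeff
  positivity

lemma invSqrtCoeff_succ (n : ℕ) :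
    invSqrtCoeff (n + 1) = invSqrtCoeff n * ((2 * n + 1) / (2 * n + 2)) := by
  rw [invSqrtCoeff, invSqrtCoeff, Nat.mul_succ, Nat.factorial_succ, Nat.factorial_succ,
    Nat.factorial_succ]
  field_simp
  push_cast
  ring

lemma factorial_mul_invSqrtCoeff_eq_eval_ascPochhammer (n : ℕ) :
    n.factorial * invSqrtCoeff n = (ascPochhammer ℝ n).eval 2⁻¹ := by
  induction n with
  | zero => simp [invSqrtCoeff]
  | succ n ih =>
    rw [ascPochhammer_succ_eval, ← ih, invSqrtCoeff_succ, Nat.factorial_succ]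
    field_simp
    push_cast
    ring

lemma multichoose_two_inv_eq_invSqrtCoeff (n : ℕ) :
    Ring.multichoose (2⁻¹ : ℝ) n = invSqrtCoeff n := by
  have h := Ring.factorial_nsmul_multichoose_eq_ascPochhammer (2⁻¹ : ℝ) n
  rw [Polynomial.ascPochhammer_smeval_eq_eval, ← factorial_mul_invSqrtCoeff_eq_eval_ascPochhammer,
    nsmul_eq_mul] at h
  exact mul_left_cancel₀ (by positivity) h

lemma hasSum_one_div_sqrt_one_sub {y : ℝ} (hy : |y| < 1) :
    HasSum (fun n => invSqrtCoeff n * y ^ n) (1 / √(1 - y)) := by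
  have h := (Real.one_div_one_sub_rpow_hasFPowerSeriesOnBall_zero (1 / 2)).hasSum
    (y := y) (by rwa [Metric.mem_eball, edist_zero_right, ← ofReal_norm, ENNReal.ofReal_lt_one])
  -- Mathlib's coefficients of `(1 - y)^(-a)` are `choose (a + n - 1) n`, i.e. `multichoose a n`.
  simpa [Real.sqrt_eq_rpow, FormalMultilinearSeries.ofScalars_apply_eq, ← Ring.multichoose_eq,
    multichoose_two_inv_eq_invSqrtCoeff, mul_comm] using h

lemma arcsinCoeff_eq (n : ℕ) : arcsinCoeff n = invSqrtCoeff n / (2 * n + 1) := by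
  rw [arcsinCoeff, invSqrtCoeff, div_div]

lemma arcsinCoeff_pos (n : ℕ) : 0 < arcsinCoeff n := by
  rw [arcsinCoeff_eq]; exact div_pos (invSqrtCoeff_pos n) (by positivity)

lemma invSqrtCoeff_antitone : Antitone invSqrtCoeff := by
  refine antitone_nat_of_succ_le fun n => ?_
  rw [invSqrtCoeff_succ]
  refine mul_le_of_le_one_right (invSqrtCoeff_pos n).le ?_
  rw [div_le_one (by positivity)]
  linarith

lemma arcsinCoeff_antitone : Antitone arcsinCoeff := by
  intro m n hmn
  rw [arcsinCoeff_eq, arcsinCoeff_eq]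
  gcongr
  exacts [(invSqrtCoeff_pos m).le, invSqrtCoeff_antitone hmn]

lemma integral_one_div_sqrt_one_sub_sq {x : ℝ} (hx : |x| < 1) :
    ∫ u in (0 : ℝ)..x, 1 / √(1 - u ^ 2) = arcsin x := by
  have hu : ∀ u ∈ uIcc 0 x, |u| < 1 := fun u h => by
    simpa using (abs_sub_left_of_mem_uIcc h).trans_lt (by simpa)
  rw [intervalIntegral.integral_eq_sub_of_hasDerivAt (f := arcsin), arcsin_zero, sub_zero]
  · intro u h
    obtain ⟨hu₁, hu₂⟩ := abs_lt.1 (hu u h)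
    exact hasDerivAt_arcsin hu₁.ne' hu₂.ne
  · refine ContinuousOn.intervalIntegrable fun u h => ContinuousAt.continuousWithinAt ?_
    have : √(1 - u ^ 2) ≠ 0 :=
      (Real.sqrt_pos.2 (sub_pos.2 ((sq_lt_one_iff_abs_lt_one u).2 (hu u h)))).ne'
    fun_prop (disch := assumption)

lemma hasSum_arcsin {x : ℝ} (hx : |x| < 1) :
    HasSum (fun n => arcsinCoeff n * x ^ (2 * n + 1)) (arcsin x) := by
  have hterm (n : ℕ) : ∫ u in (0 : ℝ)..x, invSqrtCoeff n * u ^ (2 * n) =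
      arcsinCoeff n * x ^ (2 * n + 1) := by
    rw [intervalIntegral.integral_const_mul, integral_pow, arcsinCoeff_eq]
    push_cast
    ring_nf
  have hsq {u : ℝ} (hu : |u| ≤ |x|) : |u ^ 2| < 1 := by
    rw [abs_pow, sq_lt_one_iff₀ (abs_nonneg u)]; exact hu.trans_lt hx
  have habs {u : ℝ} (hu : u ∈ Ι 0 x) : |u| ≤ |x| := by
    simpa using abs_sub_left_of_mem_uIcc (uIoc_subset_uIcc hu)
  rw [← integral_one_div_sqrt_one_sub_sq hx]
  simp_rw [← hterm]
  refine intervalIntegral.hasSum_integral_of_dominated_convergence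
    (fun n _ => invSqrtCoeff n * (x ^ 2) ^ n) (fun n => by fun_prop) (fun n => ?_)
    (.of_forall fun _ _ => (hasSum_one_div_sqrt_one_sub (hsq le_rfl)).summable)
    intervalIntegrable_const (.of_forall fun u hu => ?_)
  · refine .of_forall fun u hu => ?_
    rw [norm_mul, Real.norm_of_nonneg (invSqrtCoeff_pos n).le, pow_mul, norm_pow, Real.norm_eq_abs,
      abs_sq]
    exact mul_le_mul_of_nonneg_left (pow_le_pow_left₀ (sq_nonneg u) (sq_le_sq.2 (habs hu)) n)
      (invSqrtCoeff_pos n).le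
  · simpa [pow_mul] using hasSum_one_div_sqrt_one_sub (hsq (habs hu))

lemma sum_range_arcsinCoeff_le_pi_div_two (N : ℕ) : ∑ n ∈ range N, arcsinCoeff n ≤ π / 2 := by
  have hpoly : Tendsto (fun x : ℝ => ∑ n ∈ range N, arcsinCoeff n * x ^ (2 * n + 1)) (𝓝[<] 1)
      (𝓝 (∑ n ∈ range N, arcsinCoeff n)) := by
    have hcont : Continuous fun x : ℝ => ∑ n ∈ range N, arcsinCoeff n * x ^ (2 * n + 1) := by
      fun_prop
    simpa using (hcont.tendsto 1).mono_left nhdsWithin_le_nhds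
  refine le_of_tendsto hpoly ?_
  filter_upwards [Ico_mem_nhdsLT (zero_lt_one' ℝ)] with x ⟨hx0, hx1⟩
  calc ∑ n ∈ range N, arcsinCoeff n * x ^ (2 * n + 1)
      ≤ arcsin x := sum_le_hasSum _ (fun n _ => by have := (arcsinCoeff_pos n).le; positivity)
        (hasSum_arcsin (by rwa [abs_of_nonneg hx0]))
    _ ≤ π / 2 := arcsin_le_pi_div_two x

lemma hasSum_arcsinCoeff : HasSum arcsinCoeff (π / 2) := by
  have hnonneg (n : ℕ) : 0 ≤ arcsinCoeff n := (arcsinCoeff_pos n).le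
  have hsum := summable_of_sum_range_le hnonneg sum_range_arcsinCoeff_le_pi_div_two
  refine hsum.hasSum_iff.2 (le_antisymm (Real.tsum_le_of_sum_range_le hnonneg
    sum_range_arcsinCoeff_le_pi_div_two) ?_)
  have harcsin : Tendsto arcsin (𝓝[<] 1) (𝓝 (π / 2)) := by
    simpa using (continuous_arcsin.tendsto 1).mono_left nhdsWithin_le_nhds
  refine le_of_tendsto harcsin ?_
  filter_upwards [Ico_mem_nhdsLT (zero_lt_one' ℝ)] with x ⟨hx0, hx1⟩
  refine hasSum_le (fun n => ?_) (hasSum_arcsin (by rwa [abs_of_nonneg hx0]))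
    hsum.hasSum
  exact mul_le_of_le_one_right (hnonneg n) (pow_le_one₀ hx0 hx1.le)

lemma le_tsum_mul_pow_and_tsum_mul_pow_le {t : ℕ → ℝ} (ht : Antitone t) (ht0 : ∀ n, 0 ≤ t n)
    (hs : Summable t) (m : ℕ) {w : ℝ} (hw0 : 0 ≤ w) (hw1 : w ≤ 1) :
    t m ≤ ∑' k, t (m + k) * w ^ k ∧ ∑' k, t (m + k) * w ^ k ≤ t m + w * ∑' k, t (k + 1) := by
  have hsum : Summable fun k => t (m + k) * w ^ k := by
    refine ((summable_nat_add_iff m).2 hs).of_nonneg_of_le (fun k => by positivity [ht0 (m + k)])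
      fun k => ?_
    rw [add_comm]
    exact mul_le_of_le_one_right (ht0 _) (pow_le_one₀ hw0 hw1)
  rw [hsum.tsum_eq_zero_add, add_zero, pow_zero, mul_one]
  refine ⟨le_add_of_nonneg_right (tsum_nonneg fun k => by positivity [ht0 (m + (k + 1))]), ?_⟩
  rw [← tsum_mul_left]
  refine add_le_add_right ((summable_nat_add_iff 1).2 hsum |>.tsum_le_tsum (fun k => ?_)
    ((summable_nat_add_iff 1).2 hs |>.mul_left w)) _
  rw [mul_comm w]
  exact mul_le_mul (ht (by omega)) (pow_le_of_le_one hw0 hw1 (by omega)) (by positivity)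
    (ht0 _)

theorem arcsinTail_bounds (n : ℕ) (hn : 1 ≤ n) (w : ℝ) (hw0 : 0 ≤ w) (hw1 : w ≤ 1) :
    1 ≤ arcsinTail n w ∧
      arcsinTail n w ≤ 1 + (Real.pi / 2 - 1) * w / arcsinCoeff (n - 1) := by
  obtain ⟨m, rfl⟩ : ∃ m, n = m + 1 := ⟨n - 1, by omega⟩
  have htm := arcsinCoeff_pos m
  have htail : arcsinTail (m + 1) w = (∑' k, arcsinCoeff (m + k) * w ^ k) / arcsinCoeff m := by
    rw [arcsinTail, ← tsum_div_const]
    exact tsum_congr fun k => by rw [Nat.add_right_comm, Nat.add_sub_cancel, Nat.add_sub_cancel,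
      div_mul_eq_mul_div]
  have hrest : ∑' k, arcsinCoeff (k + 1) = π / 2 - 1 := by
    simpa [arcsinCoeff] using ((hasSum_nat_add_iff' 1).2 hasSum_arcsinCoeff).tsum_eq
  obtain ⟨hlow, hup⟩ := le_tsum_mul_pow_and_tsum_mul_pow_le arcsinCoeff_antitone
    (fun n => (arcsinCoeff_pos n).le) hasSum_arcsinCoeff.summable m hw0 hw1
  rw [hrest] at hup
  rw [htail, Nat.add_sub_cancel, le_div_iff₀ htm, div_le_iff₀ htm, add_mul, one_mul,
    div_mul_cancel₀ _ htm.ne']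
  exact ⟨by linarith, by linarith⟩
end

section
/- π = ∑_{i=1}^∞ (5i − 2) · ∏_{j=1}^{i−1} ( j·(2j−1) / (3·(3j+1)·(3j+2)) ). Concretely, the series begins 3 + 8·(1·1)/(3·4·5) + 13·(1·1)/(3·4·5)·(2·3)/(3·7·8) + ⋯ . -/
/-!
Since `1 - x(1-x)²/2 = (2-x)(1+x²)/2`, we have `π = ∫₀¹ 4/(1+x²) dx = ∫₀¹ (4-2x)/(1 - x(1-x)²/2) dx`.
On `[0,1]` the ratio `x(1-x)²/2` is at most `2/27`, so the geometric series may be integrated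
termwise, and by Beta integrals the `n`-th term `∫₀¹ (4-2x)(x(1-x)²/2)ⁿ dx` equals
`(5n+3) · 2 n! (2n)! / (2ⁿ (3n+2)!)`, and consecutive values of `2 n! (2n)! / (2ⁿ (3n+2)!)` have
ratio `(n+1)(2n+1) / (3(3n+4)(3n+5))`, the factor of Gosper's product.
-/

open intervalIntegral Nat

theorem integral_pow_mul_one_sub_pow (a b : ℕ) :
    ∫ x in (0 : ℝ)..1, x ^ a * (1 - x) ^ b = (a ! * b ! : ℝ) / (a + b + 1)! := by
  induction b generalizing a with
  | zero =>
    simp only [pow_zero, mul_one, integral_pow, add_zero, factorial_succ]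
    push_cast
    field_simp
    simp
  | succ b ih =>
    have hsplit : ∀ x : ℝ, x ^ a * (1 - x) ^ (b + 1)
        = x ^ a * (1 - x) ^ b - x ^ (a + 1) * (1 - x) ^ b := fun x => by ring
    simp_rw [hsplit]
    rw [integral_sub ((by fun_prop : Continuous _).intervalIntegrable _ _)
      ((by fun_prop : Continuous _).intervalIntegrable _ _), ih, ih,
      show a + 1 + b + 1 = a + (b + 1) + 1 by ring]
    rw [factorial_succ (a + (b + 1)), factorial_succ a, factorial_succ b,
      show a + (b + 1) = a + b + 1 by ring]
    push_cast
    field_simp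
    ring

theorem prod_gosper_ratio_eq (n : ℕ) :
    ∏ j ∈ Finset.range n,
      (((j : ℝ) + 1) * (2 * ((j : ℝ) + 1) - 1)) /
        (3 * (3 * ((j : ℝ) + 1) + 1) * (3 * ((j : ℝ) + 1) + 2))
    = 2 * n ! * (2 * n)! / (2 ^ n * (3 * n + 2)!) := by
  induction n with
  | zero => norm_num
  | succ n ih =>
    rw [Finset.prod_range_succ, ih, show 2 * (n + 1) = 2 * n + 1 + 1 by ring,
      show 3 * (n + 1) + 2 = 3 * n + 2 + 1 + 1 + 1 by ring]
    simp only [factorial_succ]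
    push_cast
    field_simp
    ring

theorem integral_four_sub_two_mul_mul_pow (n : ℕ) :
    ∫ x in (0 : ℝ)..1, (4 - 2 * x) * (x * (1 - x) ^ 2 / 2) ^ n
    = (5 * (n : ℝ) + 3) * (2 * n ! * (2 * n)! / (2 ^ n * (3 * n + 2)!)) := by
  have hsplit : ∀ x : ℝ, (4 - 2 * x) * (x * (1 - x) ^ 2 / 2) ^ n
      = 4 / 2 ^ n * (x ^ n * (1 - x) ^ (2 * n + 1))
        + 2 / 2 ^ n * (x ^ (n + 1) * (1 - x) ^ (2 * n)) := fun x => by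
    rw [div_pow, mul_pow, ← pow_mul]
    ring
  simp_rw [hsplit]
  rw [integral_add ((by fun_prop : Continuous _).intervalIntegrable _ _)
      ((by fun_prop : Continuous _).intervalIntegrable _ _), integral_const_mul, integral_const_mul,
    integral_pow_mul_one_sub_pow, integral_pow_mul_one_sub_pow,
    show n + (2 * n + 1) + 1 = 3 * n + 2 by ring, show n + 1 + 2 * n + 1 = 3 * n + 2 by ring,
    factorial_succ n, factorial_succ (2 * n)]
  push_cast
  field_simp
  ring

theorem hasSum_integral_mul_pow_of_abs_le {a b r : ℝ} {g u : ℝ → ℝ}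
    (hg : ContinuousOn g (Set.uIcc a b)) (hu : ContinuousOn u (Set.uIcc a b)) (hr : r < 1)
    (hur : ∀ x ∈ Set.uIcc a b, |u x| ≤ r) :
    HasSum (fun n : ℕ => ∫ x in a..b, g x * u x ^ n) (∫ x in a..b, g x / (1 - u x)) := by
  have hr₀ : 0 ≤ r := (abs_nonneg _).trans (hur a Set.left_mem_uIcc)
  have hgeom : ∀ x, HasSum (fun n : ℕ => |g x| * r ^ n) (|g x| * (1 - r)⁻¹) := fun x =>
    (hasSum_geometric_of_lt_one hr₀ hr).mul_left _
  refine hasSum_integral_of_dominated_convergence (fun n x => |g x| * r ^ n)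
    (fun n => ((hg.mul (hu.pow n)).mono Set.uIoc_subset_uIcc).aestronglyMeasurable
      measurableSet_uIoc)
    (fun n => .of_forall fun x hx => ?_) (.of_forall fun x _ => (hgeom x).summable) ?_
    (.of_forall fun x hx => ?_)
  · rw [norm_mul, norm_pow, Real.norm_eq_abs, Real.norm_eq_abs]
    gcongr
    exact hur x (Set.uIoc_subset_uIcc hx)
  · simp only [fun x => (hgeom x).tsum_eq]
    exact hg.intervalIntegrable.abs.mul_const _
  · have hux : |u x| < 1 := (hur x (Set.uIoc_subset_uIcc hx)).trans_lt hr
    simpa only [div_eq_mul_inv] using (hasSum_geometric_of_abs_lt_one hux).mul_left (g x)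

theorem abs_mul_one_sub_sq_div_two_le {x : ℝ} (hx : x ∈ Set.Icc 0 1) :
    |x * (1 - x) ^ 2 / 2| ≤ 2 / 27 := by
  obtain ⟨hx₀, hx₁⟩ := hx
  -- 2/27 - x(1-x)²/2 = (3x-1)²(4-3x)/54
  rw [abs_of_nonneg (by positivity)]
  nlinarith [mul_nonneg (sq_nonneg (3 * x - 1)) (by linarith : (0 : ℝ) ≤ 4 - 3 * x)]

theorem integral_four_sub_two_mul_div_eq_pi :
    ∫ x in (0 : ℝ)..1, (4 - 2 * x) / (1 - x * (1 - x) ^ 2 / 2) = Real.pi := by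
  have hcongr : Set.EqOn (fun x : ℝ => (4 - 2 * x) / (1 - x * (1 - x) ^ 2 / 2))
      (fun x => 4 * (1 + x ^ 2)⁻¹) (Set.uIcc 0 1) := by
    intro x hx
    rw [Set.uIcc_of_le zero_le_one] at hx
    have h2x : 2 - x ≠ 0 := by linarith [hx.2]
    dsimp only
    rw [show 1 - x * (1 - x) ^ 2 / 2 = (2 - x) * (1 + x ^ 2) / 2 by ring]
    field_simp
    ring
  rw [integral_congr hcongr, integral_const_mul, integral_inv_one_add_sq, Real.arctan_one,
    Real.arctan_zero]
  ring

theorem gosper_pi_series :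
    Real.pi = ∑' i : ℕ, (5 * ((i : ℝ) + 1) - 2) *
      ∏ j ∈ Finset.range i,
        (((j : ℝ) + 1) * (2 * ((j : ℝ) + 1) - 1)) /
          (3 * (3 * ((j : ℝ) + 1) + 1) * (3 * ((j : ℝ) + 1) + 2)) := by
  have hsum := hasSum_integral_mul_pow_of_abs_le (a := 0) (b := 1) (r := 2 / 27)
    (g := fun x => 4 - 2 * x) (u := fun x => x * (1 - x) ^ 2 / 2)
    (by fun_prop) (by fun_prop) (by norm_num)
    (fun x hx => abs_mul_one_sub_sq_div_two_le (by rwa [Set.uIcc_of_le zero_le_one] at hx))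
  rw [integral_four_sub_two_mul_div_eq_pi] at hsum
  rw [← hsum.tsum_eq]
  refine tsum_congr fun n => ?_
  rw [integral_four_sub_two_mul_mul_pow, prod_gosper_ratio_eq]
  ring
end
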